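/- Let N > 2 and let H : ℝ → ℝ be differentiable and strictly positive on (-1, ∞) with H(z) → ∞ as z → ∞, suppose x ↦ 1/H(x) is integrable on (z, ∞) for every z > -1, and suppose that (1+z)·H'(z)/H(z) tends to N/2 as z → ∞. Define H_p(z) = (1+z)⁻¹ ∫_z^∞ dx/H(x). Then the recession velocity of the particle horizon H_p(z)·H(z) tends to 2/(N-2) as z → ∞; equivalently, the particle horizon velocity dH_p/dt = H_p(z)H(z) + 1 tends to N/(N-2) at the origin of the universe. -/

import Mathlib

open MeasureTheory Filter Set Topology

/-!
Write `H_p(z) H(z)` as the quotient of `f(z) = ∫_z^∞ dx/H(x)` by `g(z) = (1+z)/H(z)`.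
Since `(1+z)H'/H` is eventually above some `c > 1`, `(1+z)^c/H` is eventually decreasing, so
`g(z) = O((1+z)^(1-c)) → 0`; also `f → 0`. By L'Hôpital the quotient has the limit of
`f'/g' = 1/((1+z)H'/H - 1)`, namely `1/(N/2 - 1) = 2/(N-2)`.
-/

theorem hasDerivAt_integral_Ioi {E : Type*} [NormedAddCommGroup E] [NormedSpace ℝ E]
    [CompleteSpace E] {f : ℝ → E} {a z : ℝ} (hf : IntegrableOn f (Ioi a)) (hz : a < z)
    (hcont : ContinuousAt f z) :
    HasDerivAt (fun y => ∫ x in Ioi y, f x) (-f z) z := by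
  have hFTC : HasDerivAt (fun y => ∫ x in a..y, f x) (f z) z :=
    intervalIntegral.integral_hasDerivAt_right
      ((intervalIntegrable_iff_integrableOn_Ioc_of_le hz.le).2 (hf.mono_set Ioc_subset_Ioi_self))
      ⟨Ioi a, Ioi_mem_nhds hz, hf.aestronglyMeasurable⟩ hcont
  refine (hFTC.const_sub (∫ x in Ioi a, f x)).congr_of_eventuallyEq ?_
  filter_upwards [lt_mem_nhds hz] with y hy
  rw [← intervalIntegral.integral_Ioi_sub_Ioi hf hy.le, sub_sub_cancel]

theorem antitoneOn_one_add_rpow_div {H H' : ℝ → ℝ} {a c : ℝ} (ha : -1 < a)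
    (hderiv : ∀ z ∈ Ici a, HasDerivAt H (H' z) z) (hpos : ∀ z ∈ Ici a, 0 < H z)
    (hgrowth : ∀ z ∈ Ici a, c * H z ≤ (1 + z) * H' z) :
    AntitoneOn (fun z => (1 + z) ^ c / H z) (Ici a) := by
  have hderiv' : ∀ z ∈ Ici a, HasDerivAt (fun z => (1 + z) ^ c / H z)
      ((1 + z) ^ (c - 1) * (c * H z - (1 + z) * H' z) / H z ^ 2) z := by
    intro z hz
    have h1z : 0 < 1 + z := by linarith [mem_Ici.mp hz]
    have hpow : HasDerivAt (fun z : ℝ => (1 + z) ^ c) (c * (1 + z) ^ (c - 1)) z := by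
      simpa using ((hasDerivAt_id z).const_add 1).rpow_const (p := c) (Or.inl h1z.ne')
    refine (hpow.div (hderiv z hz) (hpos z hz).ne').congr_deriv ?_
    rw [show (1 + z) ^ c = (1 + z) ^ (c - 1) * (1 + z) by
      rw [← Real.rpow_add_one h1z.ne', sub_add_cancel]]
    ring
  refine antitoneOn_of_hasDerivWithinAt_nonpos (convex_Ici a)
    (fun z hz => (hderiv' z hz).continuousAt.continuousWithinAt)
    (fun z hz => (hderiv' z (interior_subset hz)).hasDerivWithinAt) fun z hz => ?_
  have hz := interior_subset hz
  have h1z : 0 < 1 + z := by linarith [mem_Ici.mp hz]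
  have hnum : c * H z - (1 + z) * H' z ≤ 0 := by linarith [hgrowth z hz]
  exact div_nonpos_of_nonpos_of_nonneg
    (mul_nonpos_of_nonneg_of_nonpos (by positivity) hnum) (sq_nonneg _)

theorem tendsto_one_add_div_atTop_zero {H H' : ℝ → ℝ} {L : ℝ} (hL : 1 < L)
    (hderiv : ∀ᶠ z in atTop, HasDerivAt H (H' z) z) (hpos : ∀ᶠ z in atTop, 0 < H z)
    (hlog : Tendsto (fun z => (1 + z) * H' z / H z) atTop (𝓝 L)) :
    Tendsto (fun z => (1 + z) / H z) atTop (𝓝 0) := by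
  obtain ⟨c, hc, hcL⟩ := exists_between hL
  obtain ⟨a, ha⟩ := eventually_atTop.mp <| (eventually_gt_atTop (-1)).and <| hderiv.and <|
    hpos.and <| hlog.eventually (eventually_gt_nhds hcL)
  have hgrowth : ∀ z ∈ Ici a, c * H z ≤ (1 + z) * H' z := fun z hz => by
    obtain ⟨-, -, hHz, hlogz⟩ := ha z hz
    exact ((lt_div_iff₀ hHz).mp hlogz).le
  have hanti := antitoneOn_one_add_rpow_div (ha a le_rfl).1 (fun z hz => (ha z hz).2.1)
    (fun z hz => (ha z hz).2.2.1) hgrowth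
  have hdecay : Tendsto (fun z : ℝ => (1 + a) ^ c / H a * (1 + z) ^ (1 - c)) atTop (𝓝 0) := by
    have := (tendsto_rpow_neg_atTop (by linarith : 0 < c - 1)).comp
      (tendsto_atTop_add_const_left atTop 1 tendsto_id)
    simpa [Function.comp_def] using this.const_mul ((1 + a) ^ c / H a)
  refine tendsto_of_tendsto_of_tendsto_of_le_of_le' tendsto_const_nhds hdecay ?_ ?_ <;>
    filter_upwards [eventually_ge_atTop a] with z hz <;>
    obtain ⟨hz1, -, hHz, -⟩ := ha z hz <;>
    have h1z : 0 < 1 + z := by linarith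
  · positivity
  · calc (1 + z) / H z = (1 + z) ^ c / H z * (1 + z) ^ (1 - c) := by
          rw [div_mul_eq_mul_div, ← Real.rpow_add h1z, add_sub_cancel, Real.rpow_one]
      _ ≤ (1 + a) ^ c / H a * (1 + z) ^ (1 - c) :=
          mul_le_mul_of_nonneg_right (hanti self_mem_Ici hz hz) (by positivity)

noncomputable def particleHorizon (H : ℝ → ℝ) (z : ℝ) : ℝ :=
  (1 + z)⁻¹ * ∫ x in Ioi z, 1 / H x

theorem tendsto_particleHorizon_mul {H H' : ℝ → ℝ} {a L : ℝ} (hL : 1 < L)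
    (hderiv : ∀ᶠ z in atTop, HasDerivAt H (H' z) z) (hpos : ∀ᶠ z in atTop, 0 < H z)
    (hint : IntegrableOn (fun x => 1 / H x) (Ioi a))
    (hlog : Tendsto (fun z => (1 + z) * H' z / H z) atTop (𝓝 L)) :
    Tendsto (fun z => particleHorizon H z * H z) atTop (𝓝 (L - 1)⁻¹) := by
  have hf' : ∀ᶠ z in atTop, HasDerivAt (fun y => ∫ x in Ioi y, 1 / H x) (-(1 / H z)) z := by
    filter_upwards [eventually_gt_atTop a, hderiv, hpos] with z hz hHz' hHz
    exact hasDerivAt_integral_Ioi hint hz (continuousAt_const.div hHz'.continuousAt hHz.ne')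
  have hg' : ∀ᶠ z in atTop, HasDerivAt (fun y => (1 + y) / H y)
      ((H z - (1 + z) * H' z) / H z ^ 2) z := by
    filter_upwards [hderiv, hpos] with z hHz' hHz
    have := ((hasDerivAt_id' z).const_add 1).div hHz' hHz.ne'
    rwa [one_mul] at this
  have hlog_gt : ∀ᶠ z in atTop, 1 < (1 + z) * H' z / H z :=
    hlog.eventually (eventually_gt_nhds hL)
  have hquot : ∀ᶠ z in atTop,
      -(1 / H z) / ((H z - (1 + z) * H' z) / H z ^ 2) = ((1 + z) * H' z / H z - 1)⁻¹ := by
    filter_upwards [hpos, hlog_gt] with z hHz hgt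
    rw [one_lt_div hHz] at hgt
    have : H z - (1 + z) * H' z ≠ 0 := by linarith
    rw [div_sub_one hHz.ne', inv_div]
    field_simp
    ring
  have hg'_ne : ∀ᶠ z in atTop, (H z - (1 + z) * H' z) / H z ^ 2 ≠ 0 := by
    filter_upwards [hpos, hlog_gt] with z hHz hgt
    rw [one_lt_div hHz] at hgt
    exact div_ne_zero (by linarith) (by positivity)
  refine (HasDerivAt.lhopital_zero_atTop hf' hg' hg'_ne (tendsto_integral_Ioi_zero tendsto_id)
    (tendsto_one_add_div_atTop_zero hL hderiv hpos hlog)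
    (((hlog.sub_const 1).inv₀ (by linarith)).congr' (hquot.mono fun _ h => h.symm))).congr' ?_
  filter_upwards [hpos, eventually_gt_atTop (-1)] with z hHz hz
  have : 1 + z ≠ 0 := by linarith
  rw [particleHorizon]
  field_simp

theorem particleHorizon_velocity_at_origin_general
    (N : ℝ) (hN : 2 < N)
    (H H' : ℝ → ℝ)
    (hHderiv : ∀ z ∈ Set.Ioi (-1 : ℝ), HasDerivAt H (H' z) z)
    (hHpos : ∀ x ∈ Set.Ioi (-1 : ℝ), 0 < H x)
    (hint : ∀ z : ℝ, -1 < z → IntegrableOn (fun x => 1 / H x) (Set.Ioi z))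
    (hlog : Tendsto (fun z => (1 + z) * H' z / H z) atTop (nhds (N / 2)))
    (Hp : ℝ → ℝ)
    (hHp : ∀ z : ℝ, Hp z = (1 + z)⁻¹ * ∫ x in Set.Ioi z, 1 / H x) :
    Tendsto (fun z => Hp z * H z) atTop (nhds (2 / (N - 2))) ∧
    Tendsto (fun z => Hp z * H z + 1) atTop (nhds (N / (N - 2))) := by
  obtain rfl : Hp = particleHorizon H := funext hHp
  have hvel := tendsto_particleHorizon_mul (by linarith)
    ((eventually_gt_atTop (-1)).mono hHderiv) ((eventually_gt_atTop (-1)).mono hHpos)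
    (hint 0 (by norm_num)) hlog
  have hN2 : N - 2 ≠ 0 := by linarith
  rw [show (N / 2 - 1)⁻¹ = 2 / (N - 2) by field_simp] at hvel
  refine ⟨hvel, ?_⟩
  convert hvel.add_const 1 using 2
  field_simp
  ring

/-- Recession velocity of the particle horizon at the origin of the universe:
if `N > 2` and `(1+z)H'(z)/H(z) → N/2` as `z → ∞`, then
`H_p(z)·H(z) → 2/(N-2)` as `z → ∞`; equivalently, the particle horizon velocity
`dH_p/dt = H_p·H + 1 → N/(N-2)`. -/
theorem particleHorizon_velocity_at_origin
    (N : ℝ) (hN : 2 < N)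
    (H H' : ℝ → ℝ)
    (hHderiv : ∀ z ∈ Set.Ioi (-1 : ℝ), HasDerivAt H (H' z) z)
    (hHpos : ∀ x ∈ Set.Ioi (-1 : ℝ), 0 < H x)
    (hHtop : Tendsto H atTop atTop)
    (hint : ∀ z : ℝ, -1 < z → IntegrableOn (fun x => 1 / H x) (Set.Ioi z))
    (hlog : Tendsto (fun z => (1 + z) * H' z / H z) atTop (nhds (N / 2)))
    (Hp : ℝ → ℝ)
    (hHp : ∀ z : ℝ, Hp z = (1 + z)⁻¹ * ∫ x in Set.Ioi z, 1 / H x) :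
    Tendsto (fun z => Hp z * H z) atTop (nhds (2 / (N - 2))) ∧
    Tendsto (fun z => Hp z * H z + 1) atTop (nhds (N / (N - 2))) :=
  particleHorizon_velocity_at_origin_general N hN H H' hHderiv hHpos hint hlog Hp hHp
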